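/- arXiv:1801.05928 — 6 statements merged into one kernel-verified Lean document; each statement's English description precedes it below -/
import Mathlib

section
/- No positive integer m with 1 < m < 49 is representable. -/
def Representable (m : ℕ) : Prop :=
  ∃ X : Finset ℕ, (∀ x ∈ X, 0 < x) ∧
    (∑ x ∈ X, (1 : ℚ) / x) = 1 ∧ (∑ x ∈ X, x ^ 2) = m

/-! If `∑ x ∈ X, x ^ 2 < 49` then every element of `X` is at most `6`, and the only sets of
positive integers `≤ 6` whose reciprocals sum to `1` are `{1}` and `{2, 3, 6}`, with square sums
`1` and `4 + 9 + 36 = 49`. -/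

lemma Finset.subset_Icc_of_sum_sq_lt {X : Finset ℕ} {n : ℕ} (hpos : ∀ x ∈ X, 0 < x)
    (hsum : ∑ x ∈ X, x ^ 2 < (n + 1) ^ 2) : X ⊆ Finset.Icc 1 n := by
  intro x hx
  have hsq : x ^ 2 < (n + 1) ^ 2 :=
    (Finset.single_le_sum (f := fun i => i ^ 2) (fun _ _ => Nat.zero_le _) hx).trans_lt hsum
  exact Finset.mem_Icc.mpr
    ⟨hpos x hx, Nat.lt_succ_iff.mp (lt_of_pow_lt_pow_left₀ 2 (Nat.zero_le _) hsq)⟩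

lemma eq_one_or_eq_two_three_six_of_sum_inv_eq_one {X : Finset ℕ} (hX : X ⊆ Finset.Icc 1 6)
    (hrec : ∑ x ∈ X, (1 : ℚ) / x = 1) : X = {1} ∨ X = {2, 3, 6} := by
  have hmem : X ∈ (Finset.Icc 1 6).powerset := Finset.mem_powerset.mpr hX
  fin_cases hmem <;> norm_num at hrec <;> decide

theorem not_representable_between_one_and_49 :
    ∀ m : ℕ, 1 < m → m < 49 → ¬ Representable m := by
  rintro m hm1 hm49 ⟨X, hpos, hrec, rfl⟩
  have hX : X ⊆ Finset.Icc 1 6 := Finset.subset_Icc_of_sum_sq_lt hpos hm49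
  rcases eq_one_or_eq_two_three_six_of_sum_inv_eq_one hX hrec with rfl | rfl <;> simp at hm1 hm49
end

section
/- If X is a representation of an integer m (a finite set of positive integers with reciprocals summing to 1 and squares summing to m) and m > 1, then the set Y = {2} ∪ 2X (where 2X = {2x : x ∈ X}) is a representation of 4m + 4. -/
def IsRepresentation (X : Finset ℕ) (m : ℕ) : Prop :=
  (∀ x ∈ X, 0 < x) ∧ (∑ x ∈ X, (1 : ℚ) / x) = 1 ∧ (∑ x ∈ X, x ^ 2) = m

open Finset

/-- The term `1/1` already exhausts the reciprocal sum, and all other terms are positive. -/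
theorem eq_singleton_one_of_sum_one_div {X : Finset ℕ} (hpos : ∀ x ∈ X, 0 < x)
    (hrec : ∑ x ∈ X, (1 : ℚ) / x = 1) (h1 : 1 ∈ X) : X = {1} := by
  have hrest : ∑ x ∈ X.erase 1, (1 : ℚ) / x = 0 := by
    have := add_sum_erase X (fun x => (1 : ℚ) / x) h1
    simp only [Nat.cast_one, div_one] at this
    linarith
  have hempty : X.erase 1 = ∅ := by
    refine eq_empty_of_forall_notMem fun x hx => ?_
    have hx0 := (sum_eq_zero_iff_of_nonneg (fun y _ => by positivity)).mp hrest x hx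
    have := hpos x (mem_of_mem_erase hx)
    simp only [one_div, inv_eq_zero, Nat.cast_eq_zero] at hx0
    omega
  rw [← insert_erase h1, hempty]
  rfl

theorem IsRepresentation.one_notMem {X : Finset ℕ} {m : ℕ} (hX : IsRepresentation X m)
    (hm : 1 < m) : 1 ∉ X := by
  obtain ⟨hpos, hrec, hsq⟩ := hX
  intro h1
  rw [eq_singleton_one_of_sum_one_div hpos hrec h1, sum_singleton] at hsq
  omega

theorem f0_representation (X : Finset ℕ) (m : ℕ) (hm : 1 < m)
    (hX : IsRepresentation X m) :
    IsRepresentation (insert 2 (X.image (fun x => 2 * x))) (4 * m + 4) := by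
  have h2 : 2 ∉ X.image (fun x => 2 * x) := by simpa using hX.one_notMem hm
  have hinj : Set.InjOn (fun x : ℕ => 2 * x) X := (mul_right_injective₀ two_ne_zero).injOn
  obtain ⟨hpos, hrec, hsq⟩ := hX
  refine ⟨?_, ?_, ?_⟩
  · simp only [mem_insert, mem_image]
    rintro _ (rfl | ⟨x, hx, rfl⟩)
    exacts [two_pos, Nat.mul_pos two_pos (hpos x hx)]
  · rw [sum_insert h2, sum_image hinj]
    simp only [Nat.cast_mul, Nat.cast_ofNat, one_div, mul_inv]
    simp only [one_div] at hrec
    rw [← mul_sum, hrec]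
    norm_num
  · rw [sum_insert h2, sum_image hinj]
    simp only [mul_pow]
    rw [← mul_sum, hsq]
    ring
end

section
/- If X is a representation of an integer m with 39 ∉ X, then Y = {3, 7, 78, 91} ∪ 2X is a representation of 4m + 14423, and moreover 39 ∉ Y. -/
theorem IsRepresentation.union_image_mul {X A : Finset ℕ} {m k : ℕ} (hX : IsRepresentation X m)
    (hk : 0 < k) (hA_pos : ∀ a ∈ A, 0 < a) (hA_sum : ∑ a ∈ A, (1 : ℚ) / a = 1 - 1 / k)
    (hdisj : Disjoint A (X.image (k * ·))) :
    IsRepresentation (A ∪ X.image (k * ·)) (∑ a ∈ A, a ^ 2 + k ^ 2 * m) := by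
  obtain ⟨hX_pos, hX_sum, hX_sq⟩ := hX
  have hinj : Set.InjOn (k * ·) X := (mul_right_injective₀ hk.ne').injOn
  refine ⟨?_, ?_, ?_⟩
  · simp only [Finset.mem_union, Finset.mem_image]
    rintro _ (ha | ⟨x, hx, rfl⟩)
    exacts [hA_pos _ ha, Nat.mul_pos hk (hX_pos x hx)]
  · rw [Finset.sum_union hdisj, Finset.sum_image hinj, hA_sum]
    calc 1 - 1 / k + ∑ x ∈ X, (1 : ℚ) / ↑(k * x)
        = 1 - 1 / k + 1 / k * ∑ x ∈ X, (1 : ℚ) / x := by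
          push_cast
          rw [Finset.mul_sum]
          congr 1
          refine Finset.sum_congr rfl fun x _ => ?_
          rw [div_mul_div_comm, one_mul]
      _ = 1 := by rw [hX_sum]; ring
  · rw [Finset.sum_union hdisj, Finset.sum_image hinj, ← hX_sq, Finset.mul_sum]
    simp only [mul_pow]

theorem notMem_image_two_mul_of_odd {X : Finset ℕ} {n : ℕ} (hn : Odd n) :
    n ∉ X.image (2 * ·) := by
  rintro h
  obtain ⟨x, -, rfl⟩ := Finset.mem_image.mp h
  exact Nat.not_odd_iff_even.mpr (even_two_mul x) hn

theorem f3_representation (X : Finset ℕ) (m : ℕ)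
    (hX : IsRepresentation X m) (h39 : 39 ∉ X) :
    IsRepresentation (({3, 7, 78, 91} : Finset ℕ) ∪ X.image (fun x => 2 * x))
      (4 * m + 14423) ∧
    39 ∉ ({3, 7, 78, 91} : Finset ℕ) ∪ X.image (fun x => 2 * x) := by
  have hdisj : Disjoint ({3, 7, 78, 91} : Finset ℕ) (X.image (2 * ·)) := by
    have h78 : 78 ∉ X.image (2 * ·) := by
      simp only [Finset.mem_image, not_exists, not_and]
      rintro x hx h
      exact h39 (by rwa [show x = 39 by omega] at hx)
    simp only [Finset.disjoint_insert_left, Finset.disjoint_singleton_left]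
    exact ⟨notMem_image_two_mul_of_odd (by decide), notMem_image_two_mul_of_odd (by decide),
      h78, notMem_image_two_mul_of_odd (by decide)⟩
  have hrep := hX.union_image_mul two_pos (by decide) (by norm_num) hdisj
  refine ⟨by convert hrep using 1; norm_num; ring, ?_⟩
  rw [Finset.mem_union, not_or]
  exact ⟨by decide, notMem_image_two_mul_of_odd (by decide)⟩
end

section
/- If X is a representation of an integer m with 21 ∉ X and 39 ∉ X, then Y = {5, 7, 9, 45, 78, 91} ∪ 2X is a representation of 4m + 16545 with 21 ∉ Y and 39 ∉ Y. -/
/-! Doubling a representation halves its reciprocal sum, so the missing `1/2` can be supplied by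
any set `A` of reciprocal sum `1/2` disjoint from `2X`. For `A = {5, 7, 9, 45, 78, 91}`, the odd
elements are never of the form `2x` and `78 = 2 · 39` is excluded by `39 ∉ X`; likewise the odd
numbers `21` and `39` cannot enter the new set. -/

namespace Finset

lemma odd_notMem_image_two_mul {n : ℕ} (hn : Odd n) (X : Finset ℕ) :
    n ∉ X.image (2 * ·) := by
  intro h
  obtain ⟨x, -, rfl⟩ := mem_image.mp h
  exact Nat.not_odd_iff_even.mpr (even_two_mul x) hn

lemma two_mul_mem_image_two_mul {k : ℕ} {X : Finset ℕ} :
    2 * k ∈ X.image (2 * ·) ↔ k ∈ X :=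
  (mul_right_injective₀ two_ne_zero).mem_finset_image

lemma sum_one_div_image_two_mul (X : Finset ℕ) :
    ∑ y ∈ X.image (fun x : ℕ => 2 * x), (1 : ℚ) / y = 1 / 2 * ∑ x ∈ X, (1 : ℚ) / x := by
  rw [sum_image fun x _ y _ h => by omega, mul_sum]
  refine sum_congr rfl fun x _ => ?_
  push_cast
  rw [one_div_mul_one_div]

lemma sum_sq_image_two_mul (X : Finset ℕ) :
    ∑ y ∈ X.image (2 * ·), y ^ 2 = 4 * ∑ x ∈ X, x ^ 2 := by
  rw [sum_image fun x _ y _ h => by omega, mul_sum]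
  exact sum_congr rfl fun x _ => by ring

end Finset

open Finset

lemma IsRepresentation.union_image_two_mul {X A : Finset ℕ} {m : ℕ} (hX : IsRepresentation X m)
    (hA_pos : ∀ a ∈ A, 0 < a) (hA_sum : ∑ a ∈ A, (1 : ℚ) / a = 1 / 2)
    (hdisj : Disjoint A (X.image (2 * ·))) :
    IsRepresentation (A ∪ X.image (2 * ·)) (4 * m + ∑ a ∈ A, a ^ 2) := by
  obtain ⟨hX_pos, hX_sum, hX_sq⟩ := hX
  refine ⟨fun y hy => ?_, ?_, ?_⟩
  · rcases mem_union.mp hy with hy | hy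
    · exact hA_pos y hy
    · obtain ⟨x, hx, rfl⟩ := mem_image.mp hy
      exact Nat.mul_pos two_pos (hX_pos x hx)
  · rw [sum_union hdisj, sum_one_div_image_two_mul, hA_sum, hX_sum]
    norm_num
  · rw [sum_union hdisj, sum_sq_image_two_mul, hX_sq, add_comm]

theorem f1_representation_general (X : Finset ℕ) (m : ℕ)
    (hX : IsRepresentation X m) (h39 : 39 ∉ X) :
    IsRepresentation (({5, 7, 9, 45, 78, 91} : Finset ℕ) ∪ X.image (fun x => 2 * x))
      (4 * m + 16545) ∧
    21 ∉ ({5, 7, 9, 45, 78, 91} : Finset ℕ) ∪ X.image (fun x => 2 * x) ∧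
    39 ∉ ({5, 7, 9, 45, 78, 91} : Finset ℕ) ∪ X.image (fun x => 2 * x) := by
  have hdisj : Disjoint ({5, 7, 9, 45, 78, 91} : Finset ℕ) (X.image (2 * ·)) := by
    refine disjoint_left.mpr fun a ha => ?_
    simp only [mem_insert, mem_singleton] at ha
    rcases ha with rfl | rfl | rfl | rfl | rfl | rfl
    all_goals first
      | exact odd_notMem_image_two_mul (by decide) X
      | exact fun h => h39 (two_mul_mem_image_two_mul.mp h)
  have hrep := hX.union_image_two_mul (by decide) (by norm_num) hdisj
  rw [show ∑ a ∈ ({5, 7, 9, 45, 78, 91} : Finset ℕ), a ^ 2 = 16545 by rfl] at hrep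
  refine ⟨hrep, ?_, ?_⟩ <;>
    simp only [mem_union, not_or] <;>
    exact ⟨by decide, odd_notMem_image_two_mul (by decide) X⟩

theorem f1_representation (X : Finset ℕ) (m : ℕ)
    (hX : IsRepresentation X m) (h21 : 21 ∉ X) (h39 : 39 ∉ X) :
    IsRepresentation (({5, 7, 9, 45, 78, 91} : Finset ℕ) ∪ X.image (fun x => 2 * x))
      (4 * m + 16545) ∧
    21 ∉ ({5, 7, 9, 45, 78, 91} : Finset ℕ) ∪ X.image (fun x => 2 * x) ∧
    39 ∉ ({5, 7, 9, 45, 78, 91} : Finset ℕ) ∪ X.image (fun x => 2 * x) :=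
  f1_representation_general X m hX h39
end

section
/- If X is a representation of an integer m with 21 ∉ X and 39 ∉ X, then Y = {3, 7, 42} ∪ 2X is a representation of 4m + 1822 with 21 ∉ Y and 39 ∉ Y. -/
/-!
Scaling a representation of `m` by `c` gives a set with reciprocal sum `1/c` and square sum
`c²m`; filling the missing `1 - 1/c` with a disjoint set `Z` produces a representation of
`c²m + ∑ Z z²`. For `c = 2` take `Z = {3, 7, 42}`, since `1/3 + 1/7 + 1/42 = 1/2`: `3` and `7`
are odd and `42 = 2·21` with `21 ∉ X`, so `Z` misses `2X`, and the odd numbers `21`, `39` lie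
neither in `Z` nor in `2X`.
-/

open Finset

lemma sum_one_div_image_mul {c : ℕ} (hc : 0 < c) (X : Finset ℕ) :
    ∑ x ∈ X.image (fun x => c * x), (1 : ℚ) / x = (1 / c) * ∑ x ∈ X, (1 : ℚ) / x := by
  rw [sum_image fun a _ b _ h => Nat.eq_of_mul_eq_mul_left hc h, mul_sum]
  refine sum_congr rfl fun x _ => ?_
  push_cast
  rw [one_div_mul_one_div]

lemma sum_sq_image_mul {c : ℕ} (hc : 0 < c) (X : Finset ℕ) :
    ∑ x ∈ X.image (fun x => c * x), x ^ 2 = c ^ 2 * ∑ x ∈ X, x ^ 2 := by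
  rw [sum_image fun a _ b _ h => Nat.eq_of_mul_eq_mul_left hc h, mul_sum]
  exact sum_congr rfl fun x _ => mul_pow c x 2

lemma IsRepresentation.union_image_mul_s11 {X Z : Finset ℕ} {m c : ℕ} (hX : IsRepresentation X m)
    (hc : 0 < c) (hZ : ∀ z ∈ Z, 0 < z) (hZsum : ∑ z ∈ Z, (1 : ℚ) / z = 1 - 1 / c)
    (hdisj : Disjoint Z (X.image (fun x => c * x))) :
    IsRepresentation (Z ∪ X.image (fun x => c * x)) (c ^ 2 * m + ∑ z ∈ Z, z ^ 2) := by
  obtain ⟨hpos, hsum, hsq⟩ := hX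
  refine ⟨?_, ?_, ?_⟩
  · simp only [mem_union, mem_image]
    rintro _ (hz | ⟨x, hx, rfl⟩)
    exacts [hZ _ hz, Nat.mul_pos hc (hpos x hx)]
  · rw [sum_union hdisj, sum_one_div_image_mul hc, hsum, hZsum]
    ring
  · rw [sum_union hdisj, sum_sq_image_mul hc, hsq, add_comm]

lemma not_mem_image_two_mul_of_odd {n : ℕ} (hn : Odd n) (X : Finset ℕ) :
    n ∉ X.image (fun x => 2 * x) := by
  simp only [mem_image, not_exists, not_and]
  rintro x - rfl
  exact Nat.not_odd_iff_even.2 (even_two_mul x) hn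

theorem f2_representation_general (X : Finset ℕ) (m : ℕ)
    (hX : IsRepresentation X m) (h21 : 21 ∉ X) :
    IsRepresentation (({3, 7, 42} : Finset ℕ) ∪ X.image (fun x => 2 * x))
      (4 * m + 1822) ∧
    21 ∉ ({3, 7, 42} : Finset ℕ) ∪ X.image (fun x => 2 * x) ∧
    39 ∉ ({3, 7, 42} : Finset ℕ) ∪ X.image (fun x => 2 * x) := by
  have h42 : 42 ∉ X.image (fun x => 2 * x) := by
    simp only [mem_image, not_exists, not_and]
    rintro x hx hx42
    obtain rfl : x = 21 := by omega
    exact h21 hx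
  have hdisj : Disjoint ({3, 7, 42} : Finset ℕ) (X.image (fun x => 2 * x)) := by
    simp only [disjoint_insert_left, disjoint_singleton_left]
    exact ⟨not_mem_image_two_mul_of_odd (by decide) X,
      not_mem_image_two_mul_of_odd (by decide) X, h42⟩
  refine ⟨?_, ?_, ?_⟩
  · simpa using hX.union_image_mul_s11 two_pos (by decide) (by norm_num) hdisj
  · simpa using not_mem_image_two_mul_of_odd (by decide) X
  · simpa using not_mem_image_two_mul_of_odd (by decide) X

theorem f2_representation (X : Finset ℕ) (m : ℕ)
    (hX : IsRepresentation X m) (h21 : 21 ∉ X) (h39 : 39 ∉ X) :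
    IsRepresentation (({3, 7, 42} : Finset ℕ) ∪ X.image (fun x => 2 * x))
      (4 * m + 1822) ∧
    21 ∉ ({3, 7, 42} : Finset ℕ) ∪ X.image (fun x => 2 * x) ∧
    39 ∉ ({3, 7, 42} : Finset ℕ) ∪ X.image (fun x => 2 * x) :=
  f2_representation_general X m hX h21
end

section
/- Let t be a positive integer, m a t-representable integer, and r = (k; y₁, …, y_l) a t-translation. Then the integer k²·m + (y₁² + ⋯ + y_l²) is t-representable. -/
/-- `m` is `t`-representable. -/
def TRepresentable (t m : ℕ) : Prop :=
  ∃ X : Finset ℕ, (∀ x ∈ X, 0 < x) ∧ (∀ x ∈ X, t ≤ x) ∧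
    (∑ x ∈ X, (1 : ℚ) / x) = 1 ∧ (∑ x ∈ X, x ^ 2) = m

/-- `(k; Y)` is a `t`-translation. -/
def IsTTranslation (t k : ℕ) (Y : Finset ℕ) : Prop :=
  0 < k ∧ (∀ y ∈ Y, 0 < y) ∧ (∀ y ∈ Y, t ≤ y) ∧
    (∑ y ∈ Y, (1 : ℚ) / y) = 1 - 1 / k ∧
    (∀ y ∈ Y, y < t * k ∨ ¬ k ∣ y)

/-!
Scaling a representation `X` of `m` by `k` gives a set of reciprocal sum `1/k` and square sum
`k²m`; the translation `Y` supplies the missing `1 - 1/k`. The union is disjoint because every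
element `k * x` is a multiple of `k` with `k * x ≥ t * k`.
-/

open Finset

lemma sum_pow_image_mul_left {k : ℕ} (hk : k ≠ 0) (X : Finset ℕ) (n : ℕ) :
    ∑ z ∈ X.image (k * ·), z ^ n = k ^ n * ∑ x ∈ X, x ^ n := by
  rw [sum_image (mul_right_injective₀ hk).injOn, mul_sum]
  exact sum_congr rfl fun x _ => mul_pow k x n

lemma sum_one_div_image_mul_left {K : Type*} [Field K] [CharZero K] {k : ℕ} (hk : k ≠ 0)
    (X : Finset ℕ) : ∑ z ∈ X.image (k * ·), (1 : K) / z = 1 / k * ∑ x ∈ X, (1 : K) / x := by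
  rw [sum_image (mul_right_injective₀ hk).injOn, mul_sum]
  exact sum_congr rfl fun x _ => by rw [Nat.cast_mul, one_div_mul_one_div]

lemma disjoint_image_mul_left {t k : ℕ} {X Y : Finset ℕ} (hX : ∀ x ∈ X, t ≤ x)
    (hY : ∀ y ∈ Y, y < t * k ∨ ¬ k ∣ y) : Disjoint Y (X.image (k * ·)) := by
  simp only [disjoint_right, forall_mem_image]
  intro x hx hkx
  rcases hY _ hkx with hlt | hndvd
  · exact hlt.not_ge (by rw [mul_comm]; exact Nat.mul_le_mul_left k (hX x hx))
  · exact hndvd (dvd_mul_right k x)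

theorem translation_of_representable_general (t m k : ℕ) (Y : Finset ℕ)
    (hm : TRepresentable t m) (hr : IsTTranslation t k Y) :
    TRepresentable t (k ^ 2 * m + ∑ y ∈ Y, y ^ 2) := by
  obtain ⟨X, hX_pos, hX_ge, hX_recip, rfl⟩ := hm
  obtain ⟨hk, hY_pos, hY_ge, hY_recip, hY_avoid⟩ := hr
  have hdisj := disjoint_image_mul_left hX_ge hY_avoid
  refine ⟨Y ∪ X.image (k * ·), ?_, ?_, ?_, ?_⟩
  · exact forall_mem_union.2 ⟨hY_pos, forall_mem_image.2 fun x hx => Nat.mul_pos hk (hX_pos x hx)⟩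
  · exact forall_mem_union.2
      ⟨hY_ge, forall_mem_image.2 fun x hx => (hX_ge x hx).trans (Nat.le_mul_of_pos_left x hk)⟩
  · rw [sum_union hdisj, sum_one_div_image_mul_left hk.ne', hX_recip, hY_recip]
    ring
  · rw [sum_union hdisj, sum_pow_image_mul_left hk.ne', add_comm]

theorem translation_of_representable (t m k : ℕ) (Y : Finset ℕ)
    (ht : 0 < t) (hm : TRepresentable t m) (hr : IsTTranslation t k Y) :
    TRepresentable t (k ^ 2 * m + ∑ y ∈ Y, y ^ 2) :=
  translation_of_representable_general t m k Y hm hr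
end
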